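/- Let K be a conjugacy class of a finite group G such that KK⁻¹ = {1} ∪ D where D is a conjugacy class with |D| = |K|. Then ⟨K⟩ is solvable with derived length at most 3. -/

import Mathlib

/-!
If `|K| ≤ 2`, the elements of the class `K` commute, so `⟨K⟩` is abelian. Otherwise
`S = KK⁻¹ = {1} ∪ D` has `|K| + 1` elements, so each translate `a⁻¹K` (`a ∈ K`) is `S` minus
one point. The left stabilizer of `K` also stabilizes `S`, so its order divides `|K|` and `|K| + 1`
and it is trivial; hence every `s ∈ S` is the missing point of at most one translate, and
counting (with `|K| ≥ 3`) shows that `S` is closed under multiplication. So `S` is a normal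
subgroup whose nontrivial elements form the single class `D`: it is a `p`-group, its centre
meets `D`, and as the centralizer of `S` is normal it contains all of `D`, so `S` is abelian.
Finally `K` lies in one coset of `S`, so `⟨K⟩' ≤ S` and `⟨K⟩'' = 1`.
-/

open scoped Pointwise

open MulAction Subgroup

section

variable {G : Type*} [Group G]

theorem natCard_stabilizer_dvd_ncard (C : Set G) : Nat.card (stabilizer G C) ∣ C.ncard := by
  set H := stabilizer G C
  have hC : QuotientGroup.mk ⁻¹' (QuotientGroup.mk '' C⁻¹ : Set (G ⧸ H)) = C⁻¹ := by
    refine Set.Subset.antisymm ?_ (Set.subset_preimage_image _ _)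
    rintro y ⟨c, hc, hcy⟩
    have hH : (c⁻¹ * y)⁻¹ ∈ H := H.inv_mem (QuotientGroup.eq.mp hcy)
    have := (mem_stabilizer_set.mp hH c⁻¹).mpr hc
    simpa [Set.mem_inv, smul_eq_mul] using this
  rw [← Set.ncard_inv, ← Nat.card_coe_set_eq, ← hC, QuotientGroup.card_preimage_mk]
  exact dvd_mul_right _ _

theorem stabilizer_eq_bot_of_ncard_mul_inv_eq_succ {K : Set G}
    (hcard : (K * K⁻¹).ncard = K.ncard + 1) : stabilizer G K = ⊥ := by
  have hle : stabilizer G K ≤ stabilizer G (K * K⁻¹) := fun g hg => by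
    rw [mem_stabilizer_iff] at hg ⊢
    rw [← smul_mul_assoc, hg]
  have h₁ := natCard_stabilizer_dvd_ncard K
  have h₂ := (card_dvd_of_le hle).trans (natCard_stabilizer_dvd_ncard (K * K⁻¹))
  rw [hcard] at h₂
  exact card_eq_one.mp (Nat.dvd_one.mp ((Nat.dvd_add_right h₁).mp h₂))

variable {K : Set G} {s : G}

theorem inv_smul_eq_mul_inv_diff_singleton (hKK : K⁻¹ * K ⊆ K * K⁻¹)
    (hcard : (K * K⁻¹).ncard = K.ncard + 1) (hs : s ∈ K * K⁻¹) {a : G} (ha : a ∈ K)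
    (has : a * s ∉ K) : a⁻¹ • K = (K * K⁻¹) \ {s} := by
  have hfin : (K * K⁻¹).Finite := Set.finite_of_ncard_pos (by omega)
  refine Set.eq_of_subset_of_ncard_le ?_ ?_ hfin.sdiff
  · rintro _ ⟨b, hb, rfl⟩
    refine ⟨hKK (Set.mul_mem_mul (Set.inv_mem_inv.mpr ha) hb),
      fun (hbs : a⁻¹ * b = s) => has ?_⟩
    rwa [← hbs, mul_inv_cancel_left]
  · rw [Set.ncard_smul_set, Set.ncard_sdiff_singleton_of_mem hs, hcard]
    omega

theorem subsingleton_setOf_mul_notMem (hKK : K⁻¹ * K ⊆ K * K⁻¹)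
    (hcard : (K * K⁻¹).ncard = K.ncard + 1) (hs : s ∈ K * K⁻¹) :
    {a | a ∈ K ∧ a * s ∉ K}.Subsingleton := by
  rintro a ⟨ha, has⟩ b ⟨hb, hbs⟩
  have hab : (b * a⁻¹) • K = K := by
    rw [← smul_smul, inv_smul_eq_mul_inv_diff_singleton hKK hcard hs ha has,
      ← inv_smul_eq_mul_inv_diff_singleton hKK hcard hs hb hbs, smul_inv_smul]
  have := stabilizer_eq_bot_of_ncard_mul_inv_eq_succ hcard ▸ mem_stabilizer_iff.mpr hab
  exact (mul_inv_eq_one.mp (mem_bot.mp this)).symm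

-- Each of `a * s ∈ K` and `a * s * t ∈ K` fails for at most one `a ∈ K`; for any other `a`,
-- `s * t = a⁻¹ * (a * s * t) ∈ K⁻¹ * K`.
theorem mul_mem_mul_inv (hKK : K⁻¹ * K ⊆ K * K⁻¹) (hcard : (K * K⁻¹).ncard = K.ncard + 1)
    (hK : 3 ≤ K.ncard) {t : G} (hs : s ∈ K * K⁻¹) (ht : t ∈ K * K⁻¹) : s * t ∈ K * K⁻¹ := by
  set B₁ := {a | a ∈ K ∧ a * s ∉ K}
  set B₂ := {a | a ∈ K ∧ a * s ∈ K ∧ a * s * t ∉ K}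
  have hB₁ : B₁.Subsingleton := subsingleton_setOf_mul_notMem hKK hcard hs
  have hB₂ : B₂.Subsingleton := fun a ha b hb => mul_right_cancel
    (subsingleton_setOf_mul_notMem hKK hcard ht ⟨ha.2.1, ha.2.2⟩ ⟨hb.2.1, hb.2.2⟩)
  obtain ⟨a, ha, has, hast⟩ : ∃ a ∈ K, a * s ∈ K ∧ a * s * t ∈ K := by
    by_contra! hbad
    have hsub : K ⊆ B₁ ∪ B₂ := fun a ha => by
      by_cases has : a * s ∈ K
      · exact Or.inr ⟨ha, has, hbad a ha has⟩
      · exact Or.inl ⟨ha, has⟩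
    have := (Set.ncard_le_ncard hsub (hB₁.finite.union hB₂.finite)).trans
      (Set.ncard_union_le B₁ B₂)
    have := (Set.ncard_le_one hB₁.finite).mpr hB₁
    have := (Set.ncard_le_one hB₂.finite).mpr hB₂
    omega
  rw [show s * t = a⁻¹ * (a * s * t) by group]
  exact hKK (Set.mul_mem_mul (Set.inv_mem_inv.mpr ha) hast)

theorem exists_subgroup_coe_eq_mul_inv (hKK : K⁻¹ * K ⊆ K * K⁻¹)
    (hcard : (K * K⁻¹).ncard = K.ncard + 1) (hK : 3 ≤ K.ncard) :
    ∃ N : Subgroup G, (N : Set G) = K * K⁻¹ := by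
  obtain ⟨a, ha⟩ := Set.nonempty_of_ncard_ne_zero (s := K) (by omega)
  refine ⟨{ carrier := K * K⁻¹
            mul_mem' := mul_mem_mul_inv hKK hcard hK
            one_mem' := mul_inv_cancel a ▸ Set.mul_mem_mul ha (Set.inv_mem_inv.mpr ha)
            inv_mem' := fun {s} hs => ?_ }, rfl⟩
  rwa [Set.mem_inv.symm, mul_inv_rev, inv_inv]

theorem inv_mul_subset_mul_inv_of_conj_mem (hK : ∀ a ∈ K, ∀ g : G, g * a * g⁻¹ ∈ K) :
    K⁻¹ * K ⊆ K * K⁻¹ := by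
  rintro _ ⟨a', ha', b, hb, rfl⟩
  have ha : a'⁻¹ ∈ K := ha'
  show a' * b ∈ _
  rw [show a' * b = (a' * b * a'⁻¹) * a'⁻¹⁻¹ by group]
  exact Set.mul_mem_mul (hK b hb a') (Set.inv_mem_inv.mpr ha)

theorem commute_of_conj_mem_of_ncard_le_two (hK : ∀ a ∈ K, ∀ g : G, g * a * g⁻¹ ∈ K)
    (hfin : K.Finite) (h2 : K.ncard ≤ 2) {a b : G} (ha : a ∈ K) (hb : b ∈ K) :
    a * b = b * a := by
  by_contra hab
  have hne : a ≠ b := fun h => hab (h ▸ rfl)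
  have hca : a * b * a⁻¹ ≠ a := fun h =>
    hne (mul_left_cancel (mul_inv_eq_iff_eq_mul.mp h)).symm
  have hcb : a * b * a⁻¹ ≠ b := fun h => hab (mul_inv_eq_iff_eq_mul.mp h)
  have h3 : ({a, b, a * b * a⁻¹} : Set G).ncard = 3 :=
    Set.ncard_eq_three.mpr ⟨a, b, _, hne, hca.symm, hcb.symm, rfl⟩
  have hsub : ({a, b, a * b * a⁻¹} : Set G) ⊆ K := by
    simp only [Set.insert_subset_iff, Set.singleton_subset_iff]
    exact ⟨ha, hb, hK b hb a⟩
  have := Set.ncard_le_ncard hsub hfin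
  omega

theorem conj_mem_conjugatesOf {x a : G} (ha : a ∈ conjugatesOf x) (g : G) :
    g * a * g⁻¹ ∈ conjugatesOf x :=
  (ha : IsConj x a).trans (isConj_iff.mpr ⟨g, rfl⟩)

theorem isMulCommutative_of_isConj [Finite G] (N : Subgroup G) [N.Normal]
    (hN : ∀ a ∈ N, ∀ b ∈ N, a ≠ 1 → b ≠ 1 → IsConj a b) : IsMulCommutative N := by
  rcases subsingleton_or_nontrivial N with _ | _
  · exact ⟨⟨fun a b => Subsingleton.elim _ _⟩⟩
  obtain ⟨p, hp, hpN⟩ := Nat.exists_prime_and_dvd (Finite.one_lt_card (α := N)).ne'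
  have : Fact p.Prime := ⟨hp⟩
  obtain ⟨e, he⟩ := exists_prime_orderOf_dvd_card' p hpN
  have he1 : (e : G) ≠ 1 := fun h => by
    rw [OneMemClass.coe_eq_one.mp h, orderOf_one] at he
    exact hp.one_lt.ne he
  have hpow : ∀ n : N, n ^ p = 1 := fun n => by
    by_cases hn : (n : G) = 1
    · rw [OneMemClass.coe_eq_one.mp hn, one_pow]
    obtain ⟨c, hc⟩ := hN _ e.2 _ n.2 he1 hn
    rw [← he, ← orderOf_coe, hc.orderOf_eq, orderOf_coe, pow_orderOf_eq_one]
  have hpN : IsPGroup p N := fun n => ⟨1, by rw [pow_one, hpow]⟩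
  have := hpN.center_nontrivial
  obtain ⟨z, hz⟩ := exists_ne (1 : center N)
  have hz1 : ((z : N) : G) ≠ 1 := fun h => hz (Subtype.ext (Subtype.ext h))
  have hzN : ((z : N) : G) ∈ centralizer (N : Set G) := mem_centralizer_iff.mpr fun n hn =>
    congrArg Subtype.val (mem_center_iff.mp z.2 ⟨n, hn⟩)
  refine le_centralizer_iff_isMulCommutative.mp fun n hn => ?_
  by_cases hn1 : n = 1
  · exact hn1 ▸ one_mem _
  obtain ⟨c, hc⟩ := isConj_iff.mp (hN _ (z : N).2 n hn hz1 hn1)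
  exact hc ▸ (normal_centralizer (H := N)).conj_mem _ hzN c

theorem exists_normal_isMulCommutative_coe_eq_mul_inv [Finite G] {x d : G}
    (h : conjugatesOf x * (conjugatesOf x)⁻¹ = {1} ∪ conjugatesOf d)
    (hcard : (conjugatesOf d).ncard = (conjugatesOf x).ncard) (hK : 3 ≤ (conjugatesOf x).ncard) :
    ∃ N : Subgroup G, N.Normal ∧ IsMulCommutative N ∧
      (N : Set G) = conjugatesOf x * (conjugatesOf x)⁻¹ := by
  have hd : (1 : G) ∉ conjugatesOf d := fun (h1 : IsConj d 1) => by
    have hD : conjugatesOf d = {1} := Set.ext fun y => by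
      rw [isConj_one_left.mp h1]
      exact isConj_one_right
    rw [hD, Set.ncard_singleton] at hcard
    omega
  have hcardKK : (conjugatesOf x * (conjugatesOf x)⁻¹).ncard = (conjugatesOf x).ncard + 1 := by
    rw [h, Set.singleton_union, Set.ncard_insert_of_notMem hd, hcard]
  obtain ⟨N, hN⟩ := exists_subgroup_coe_eq_mul_inv
    (inv_mul_subset_mul_inv_of_conj_mem fun _ ha => conj_mem_conjugatesOf ha) hcardKK hK
  have hmemN : ∀ n, n ∈ N ↔ n = 1 ∨ IsConj d n := fun n => by
    rw [← SetLike.mem_coe, hN, h]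
    rfl
  have : N.Normal := ⟨fun n hn g => by
    rw [hmemN] at hn ⊢
    exact hn.imp (fun hn1 => by rw [hn1, mul_one, mul_inv_cancel])
      (fun hdn => conj_mem_conjugatesOf hdn g)⟩
  refine ⟨N, this, isMulCommutative_of_isConj N fun a ha b hb ha1 hb1 => ?_, hN⟩
  exact (((hmemN a).mp ha).resolve_left ha1).symm.trans (((hmemN b).mp hb).resolve_left hb1)

theorem commutator_closure_le_of_mul_inv_subset {N : Subgroup G} [N.Normal]
    (hK : K * K⁻¹ ⊆ N) : ⁅closure K, closure K⁆ ≤ N := by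
  set f := QuotientGroup.mk' N
  have hfK : ∀ a ∈ K, ∀ b ∈ K, f a = f b := fun a ha b hb => QuotientGroup.eq_iff_div_mem.mpr
    (div_eq_mul_inv a b ▸ hK (Set.mul_mem_mul ha (Set.inv_mem_inv.mpr hb)))
  have : IsMulCommutative (closure (f '' K)) := isMulCommutative_closure <| by
    rintro _ ⟨a, ha, rfl⟩ _ ⟨b, hb, rfl⟩
    rw [hfK a ha b hb]
  rw [← QuotientGroup.ker_mk' N, ← Subgroup.map_eq_bot_iff, map_commutator,
    MonoidHom.map_closure]
  exact commutator_self_eq_bot_iff.mpr this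

theorem derivedSeries_two_eq_bot_of_commutator_le {H N : Subgroup G} [IsMulCommutative N]
    (h : ⁅H, H⁆ ≤ N) : derivedSeries H 2 = ⊥ := by
  have hD : ∀ g ∈ derivedSeries H 1, (g : G) ∈ N := fun g hg =>
    h (H.map_subtype_commutator ▸ mem_map_of_mem H.subtype (derivedSeries_one H ▸ hg))
  rw [derivedSeries_succ, eq_bot_iff, commutator_le]
  intro a ha b hb
  rw [mem_bot, commutatorElement_eq_one_iff_mul_comm]
  exact Subtype.ext (setLike_mul_comm (hD a ha) (hD b hb))

end

theorem closure_K_solvable_dl_le_three_of_card_eq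
    {G : Type*} [Group G] [Finite G] (x d : G)
    (h : conjugatesOf x * (conjugatesOf x)⁻¹ = {1} ∪ conjugatesOf d)
    (hcard : (conjugatesOf d).ncard = (conjugatesOf x).ncard) :
    IsSolvable (↥(Subgroup.closure (conjugatesOf x))) ∧
    derivedSeries (↥(Subgroup.closure (conjugatesOf x))) 3 = ⊥ := by
  obtain ⟨N, hNcomm, hKN⟩ : ∃ N : Subgroup G, IsMulCommutative N ∧
      ⁅closure (conjugatesOf x), closure (conjugatesOf x)⁆ ≤ N := by
    by_cases hK : (conjugatesOf x).ncard ≤ 2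
    · refine ⟨_, isMulCommutative_closure fun a ha b hb => ?_, commutator_le_self _⟩
      exact commute_of_conj_mem_of_ncard_le_two (fun _ ha => conj_mem_conjugatesOf ha)
        (Set.toFinite _) hK ha hb
    · obtain ⟨N, _, hNcomm, hN⟩ :=
        exists_normal_isMulCommutative_coe_eq_mul_inv h hcard (by omega)
      exact ⟨N, hNcomm, commutator_closure_le_of_mul_inv_subset hN.ge⟩
  have h2 := derivedSeries_two_eq_bot_of_commutator_le hKN
  exact ⟨⟨⟨2, h2⟩⟩, le_bot_iff.mp (h2 ▸ derivedSeries_antitone _ (by norm_num : 2 ≤ 3))⟩
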